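/- arXiv:1902.06523 — 4 statements merged into one kernel-verified Lean document; each statement's English description precedes it below -/
import Mathlib

section
/- Let A be a perfect F_p-algebra. Every additive polynomial v(T) = Σ_{j≥0} a_j T^{p^j} ∈ A[T] can be written uniquely as v(T) = aT + u(T)^p − u(T), where a ∈ A and u ∈ A[T] is an additive polynomial; in fact a = Σ_{j≥0} a_j^{p^{-j}}. Equivalently, the map A ⊕ Add(A) → Add(A), (a,u) ↦ aT + F(u) − u, is a bijection, where Add(A) is the group of additive polynomials and F(u) = u^p. -/
/-- A polynomial `f ∈ A[U]` is additive if `f(U₁+U₂) = f(U₁) + f(U₂)` in `A[U₁,U₂]`. -/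
def IsAdditivePoly {A : Type*} [CommRing A] (f : Polynomial A) : Prop :=
  Polynomial.aeval (MvPolynomial.X 0 + MvPolynomial.X 1 : MvPolynomial (Fin 2) A) f
    = Polynomial.aeval (MvPolynomial.X 0 : MvPolynomial (Fin 2) A) f
      + Polynomial.aeval (MvPolynomial.X 1 : MvPolynomial (Fin 2) A) f

/-!
An additive polynomial `v` has constant derivative `v' = a₁` (its coefficient of `T`), so in
characteristic `p` the polynomial `v - a₁T` only involves the monomials `T^{pk}`. Over a perfect
ring it is therefore a `p`-th power `w^p`, where `w` is again additive (the Frobenius is injective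
on the reduced ring `A[U₁,U₂]`) and of smaller degree; decomposing `w = aT + u^p - u` by induction
gives `v = (a₁ + a)T + (w + u)^p - (w + u)`.
Uniqueness: if `aT + u^p - u = 0` with `u ≠ 0` additive, then `deg u ≥ 1` and, `A` being reduced,
`deg u^p = p deg u > deg u = deg (u - aT)`, a contradiction.
-/

open Polynomial

theorem PerfectRing.isReduced (R : Type*) [CommRing R] (p : ℕ) [Fact p.Prime] [ExpChar R p]
    [PerfectRing R p] : IsReduced R :=
  (isReduced_iff_pow_one_lt p (Fact.out : p.Prime).one_lt).2 fun x hx ↦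
    injective_frobenius R p <| by rw [frobenius_def, hx, map_zero]

namespace Polynomial

theorem natDegree_pow_of_isReduced {R : Type*} [CommSemiring R] [IsReduced R] (f : R[X])
    (n : ℕ) : (f ^ n).natDegree = n * f.natDegree := by
  rcases eq_or_ne f 0 with rfl | hf
  · cases n <;> simp
  · exact natDegree_pow' (pow_ne_zero n (leadingCoeff_ne_zero.2 hf))

theorem exists_pow_eq_of_coeff_eq_zero_of_not_dvd {R : Type*} [CommSemiring R] (p : ℕ)
    [ExpChar R p] [PerfectRing R p] {f : R[X]} (hf : ∀ n, ¬ p ∣ n → f.coeff n = 0) :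
    ∃ g : R[X], g ^ p = f := by
  refine ⟨(contract p f).map (frobeniusEquiv R p).symm, ?_⟩
  rw [← map_frobenius_expand, ← map_expand, map_map, frobenius_comp_frobeniusEquiv_symm, map_id]
  ext n
  rw [coeff_expand (expChar_pos R p), coeff_contract (expChar_pos R p).ne']
  split_ifs with h
  · rw [Nat.div_mul_cancel h]
  · exact (hf n h).symm

theorem natDegree_sub_C_mul_X_le {R : Type*} [Ring R] {f : R[X]} (hf : 0 < f.natDegree)
    (a : R) : (f - C a * X).natDegree ≤ f.natDegree :=
  (natDegree_sub_le _ _).trans <| max_le le_rfl <|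
    (natDegree_C_mul_le a X).trans <| natDegree_X_le.trans hf

end Polynomial

namespace IsAdditivePoly

variable {A : Type*} [CommRing A] {f g : A[X]}

theorem aeval_add (hf : IsAdditivePoly f) {B : Type*} [CommRing B] [Algebra A B] (x y : B) :
    aeval (x + y) f = aeval x f + aeval y f := by
  simpa [← aeval_algHom_apply] using congrArg (MvPolynomial.aeval ![x, y]) hf

theorem zero : IsAdditivePoly (0 : A[X]) := by
  simp [IsAdditivePoly]

theorem add (hf : IsAdditivePoly f) (hg : IsAdditivePoly g) : IsAdditivePoly (f + g) := by
  unfold IsAdditivePoly at *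
  rw [map_add, map_add, map_add, hf, hg]
  ring

theorem sub (hf : IsAdditivePoly f) (hg : IsAdditivePoly g) : IsAdditivePoly (f - g) := by
  unfold IsAdditivePoly at *
  rw [map_sub, map_sub, map_sub, hf, hg]
  ring

theorem C_mul_X (a : A) : IsAdditivePoly (C a * X) := by
  simp [IsAdditivePoly, mul_add]

theorem coeff_zero_eq_zero (hf : IsAdditivePoly f) : f.coeff 0 = 0 := by
  simpa [coeff_zero_eq_aeval_zero] using hf.aeval_add (0 : A) 0

open DualNumber TrivSqZeroExt in
theorem derivative_eq (hf : IsAdditivePoly f) : derivative f = C (f.coeff 1) := by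
  -- compare `f(T + ε) = f(T) + f'(T) ε` with `f(T) + f(ε) = f(T) + f(0) + f'(0) ε`
  have h := hf.aeval_add (inlAlgHom A A[X] A[X] X) ε
  rw [aeval_add_of_sq_eq_zero _ _ _ (by simp [sq]), ← zero_add ε,
    aeval_add_of_sq_eq_zero _ _ _ (by simp [sq])] at h
  simp only [aeval_algHom_apply, zero_add, ← coeff_zero_eq_aeval_zero'] at h
  simpa [algebraMap_eq_inl', coeff_derivative] using congrArg snd h

theorem eq_zero_of_C_mul_X_add_pow_sub_self_eq_zero [IsReduced A] {p : ℕ} (hp : 1 < p)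
    {a : A} {u : A[X]} (hu : IsAdditivePoly u) (h : C a * X + (u ^ p - u) = 0) :
    a = 0 ∧ u = 0 := by
  obtain rfl : u = 0 := by
    by_contra hne
    have hd : 0 < u.natDegree := Nat.pos_of_ne_zero fun h0 ↦ hne <| by
      rw [eq_C_of_natDegree_eq_zero h0, hu.coeff_zero_eq_zero, map_zero]
    have hle : p * u.natDegree ≤ u.natDegree := by
      calc p * u.natDegree = (u ^ p).natDegree := (natDegree_pow_of_isReduced u p).symm
        _ = (u - C a * X).natDegree := by rw [show u ^ p = u - C a * X by linear_combination h]
        _ ≤ u.natDegree := natDegree_sub_C_mul_X_le hd a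
    nlinarith
  simpa [zero_pow (by omega : p ≠ 0)] using congrArg (coeff · 1) h

section CharP

variable (p : ℕ) [Fact p.Prime] [CharP A p]

theorem coeff_sub_C_mul_X_eq_zero (hf : IsAdditivePoly f) {n : ℕ} (hn : ¬ p ∣ n) :
    (f - C (f.coeff 1) * X).coeff n = 0 := by
  obtain _ | _ | m := n
  · exact absurd (dvd_zero p) hn
  · simp
  · have h := congrArg (coeff · (m + 1)) hf.derivative_eq
    simp only [coeff_derivative, coeff_C, Nat.add_one_ne_zero, if_false] at h
    have hunit : IsUnit ((m + 1 + 1 : ℕ) : A) := (CharP.isUnit_natCast_iff Fact.out).2 hn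
    simpa [coeff_X] using hunit.mul_left_eq_zero.1 (by exact_mod_cast h)

theorem of_pow [IsReduced A] (hf : IsAdditivePoly (f ^ p)) : IsAdditivePoly f := by
  unfold IsAdditivePoly at *
  simp only [map_pow, ← add_pow_char] at hf
  exact frobenius_inj (MvPolynomial (Fin 2) A) p hf

theorem exists_pow_eq_sub_C_mul_X [PerfectRing A p] (hf : IsAdditivePoly f) :
    ∃ g, IsAdditivePoly g ∧ g ^ p = f - C (f.coeff 1) * X := by
  have := PerfectRing.isReduced A p
  obtain ⟨g, hg⟩ := exists_pow_eq_of_coeff_eq_zero_of_not_dvd p fun n ↦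
    hf.coeff_sub_C_mul_X_eq_zero p
  exact ⟨g, of_pow p (hg ▸ hf.sub (C_mul_X _)), hg⟩

theorem exists_decomposition [PerfectRing A p] (hf : IsAdditivePoly f) :
    ∃ a u, IsAdditivePoly u ∧ f = C a * X + (u ^ p - u) := by
  have := PerfectRing.isReduced A p
  induction hd : f.natDegree using Nat.strong_induction_on generalizing f with | _ d ih
  rcases Nat.eq_zero_or_pos d with rfl | hpos
  · refine ⟨0, 0, zero, ?_⟩
    rw [eq_C_of_natDegree_eq_zero hd, hf.coeff_zero_eq_zero]
    simp [zero_pow (Fact.out : p.Prime).ne_zero]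
  obtain ⟨g, hg, hgf⟩ := hf.exists_pow_eq_sub_C_mul_X p
  have hlt : g.natDegree < d := by
    have hle : p * g.natDegree ≤ d := by
      calc p * g.natDegree = (g ^ p).natDegree := (natDegree_pow_of_isReduced g p).symm
        _ = (f - C (f.coeff 1) * X).natDegree := by rw [hgf]
        _ ≤ d := hd ▸ natDegree_sub_C_mul_X_le (hd ▸ hpos) _
    nlinarith [(Fact.out : p.Prime).two_le]
  obtain ⟨a, u, hu, hgu⟩ := ih _ hlt hg rfl
  refine ⟨f.coeff 1 + a, g + u, hg.add hu, ?_⟩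
  rw [map_add, add_pow_char]
  linear_combination hgu - hgf

end CharP

end IsAdditivePoly

theorem additive_poly_unique_decomposition_general
    (p : ℕ) [Fact p.Prime] {A : Type*} [CommRing A] [CharP A p]
    [PerfectRing A p] :
    ∀ v : Polynomial A, IsAdditivePoly v →
      ∃! au : A × Polynomial A, IsAdditivePoly au.2 ∧
        v = Polynomial.C au.1 * Polynomial.X + (au.2 ^ p - au.2) := by
  intro v hv
  obtain ⟨a, u, hu, rfl⟩ := hv.exists_decomposition p
  refine ⟨(a, u), ⟨hu, rfl⟩, ?_⟩
  rintro ⟨b, w⟩ ⟨hw, h⟩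
  have := PerfectRing.isReduced A p
  obtain ⟨hab, hwu⟩ := (hw.sub hu).eq_zero_of_C_mul_X_add_pow_sub_self_eq_zero
      (Fact.out : p.Prime).one_lt (a := b - a) <| by
    rw [sub_pow_char, map_sub]
    linear_combination -h
  exact Prod.ext (sub_eq_zero.1 hab) (sub_eq_zero.1 hwu)

/-- Let `A` be a perfect `𝔽_p`-algebra. Every additive polynomial
`v ∈ A[T]` can be written uniquely as `v(T) = a·T + u(T)^p − u(T)` with `a ∈ A` and
`u` an additive polynomial. Equivalently, `(a,u) ↦ aT + F(u) − u` is a bijection from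
`A ⊕ Add(A)` onto the additive polynomials, where `F(u) = u^p`. -/
theorem additive_poly_unique_decomposition
    (p : ℕ) [Fact p.Prime] {A : Type*} [CommRing A] [CharP A p]
    [ExpChar A p] [PerfectRing A p] :
    ∀ v : Polynomial A, IsAdditivePoly v →
      ∃! au : A × Polynomial A, IsAdditivePoly au.2 ∧
        v = Polynomial.C au.1 * Polynomial.X + (au.2 ^ p - au.2) :=
  additive_poly_unique_decomposition_general p
end

section
/- Let A be a perfect F_p-algebra and S = Spec A. Every extension of the fppf group scheme G_{a,S} by itself whose pushout along the Artin–Schreier isogeny t ↦ t − t^p : G_{a,S} → G_{a,S} splits, is itself split. Equivalently, the endomorphism 1−F of Ext¹(G_{a,S}, G_{a,S}) (in abelian fppf sheaves) is injective. -/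
/-!
Write `d f = f(U₁+U₂) − f(U₁) − f(U₂)`. Since `d (U^m)` is homogeneous of degree `m` and
Frobenius multiplies degrees by `p`, the degree-`m` part of `c − c^p = d f` reads
`c_m = (c_{m/p})^p + f_m · d (U^m)` when `p ∣ m` and `c_m = f_m · d (U^m)` otherwise, where
`(d (U^n))^p = d (U^{np})`. By strong induction on `m` every homogeneous component `c_m` is a
multiple of `d (U^m)` (the base case is `d 1 = -1`), so `c` itself is a coboundary.
-/

open MvPolynomial Finset

namespace MvPolynomial

variable {σ R : Type*} [CommSemiring R] (p : ℕ) [ExpChar R p]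

theorem homogeneousComponent_pow_expChar (φ : MvPolynomial σ R) (m : ℕ) :
    homogeneousComponent m (φ ^ p) = ∑ k ∈ range (φ.totalDegree + 1),
      if m = k * p then homogeneousComponent k φ ^ p else 0 := by
  conv_lhs => rw [← sum_homogeneousComponent φ, sum_pow_char, map_sum]
  refine sum_congr rfl fun k _ => ?_
  exact homogeneousComponent_of_mem
    ((mem_homogeneousSubmodule _ _).2 ((homogeneousComponent_isHomogeneous k φ).pow p))

theorem homogeneousComponent_mul_expChar_pow (φ : MvPolynomial σ R) (n : ℕ) :
    homogeneousComponent (n * p) (φ ^ p) = homogeneousComponent n φ ^ p := by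
  have hp : p ≠ 0 := (expChar_pos R p).ne'
  simp_rw [homogeneousComponent_pow_expChar, Nat.mul_left_inj hp, sum_ite_eq, mem_range]
  split_ifs with hn
  · rfl
  · rw [homogeneousComponent_eq_zero _ _ (by omega), zero_pow hp]

theorem homogeneousComponent_pow_expChar_of_not_dvd (φ : MvPolynomial σ R) {m : ℕ}
    (hm : ¬ p ∣ m) : homogeneousComponent m (φ ^ p) = 0 := by
  rw [homogeneousComponent_pow_expChar]
  exact sum_eq_zero fun k _ => if_neg fun h => hm (Dvd.intro_left k h.symm)

end MvPolynomial

namespace Ga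

variable {A : Type*} [CommRing A]

noncomputable def coboundary : Polynomial A →ₗ[A] MvPolynomial (Fin 2) A :=
  (Polynomial.aeval (X 0 + X 1)).toLinearMap - (Polynomial.aeval (X 0)).toLinearMap
    - (Polynomial.aeval (X 1)).toLinearMap

theorem coboundary_X_pow (m : ℕ) :
    coboundary (Polynomial.X ^ m : Polynomial A) = (X 0 + X 1) ^ m - X 0 ^ m - X 1 ^ m := by
  simp [coboundary]

theorem isHomogeneous_coboundary_X_pow (m : ℕ) :
    (coboundary (Polynomial.X ^ m : Polynomial A)).IsHomogeneous m := by
  have hX (i : Fin 2) : (X i : MvPolynomial (Fin 2) A).IsHomogeneous 1 := isHomogeneous_X A i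
  rw [coboundary_X_pow]
  simpa using ((((hX 0).add (hX 1)).pow m).sub ((hX 0).pow m)).sub ((hX 1).pow m)

theorem homogeneousComponent_coboundary (f : Polynomial A) (m : ℕ) :
    homogeneousComponent m (coboundary f) = f.coeff m • coboundary (Polynomial.X ^ m) := by
  conv_lhs => rw [f.as_sum_support]
  have hX (i : ℕ) := homogeneousComponent_of_mem (m := m)
    ((mem_homogeneousSubmodule _ _).2 (isHomogeneous_coboundary_X_pow (A := A) i))
  simp_rw [map_sum, ← Polynomial.smul_X_eq_monomial, map_smul, hX, smul_ite,
    smul_zero, sum_ite_eq]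
  split_ifs with h
  · rfl
  · rw [Polynomial.notMem_support_iff.1 h, zero_smul]

theorem coboundary_X_pow_pow_char (p : ℕ) [ExpChar A p] (n : ℕ) :
    coboundary (Polynomial.X ^ n : Polynomial A) ^ p = coboundary (Polynomial.X ^ (n * p)) := by
  rw [coboundary_X_pow, coboundary_X_pow, sub_pow_expChar (p := p), sub_pow_expChar (p := p)]
  simp_rw [← pow_mul]

theorem homogeneousComponent_zero_eq_smul_coboundary (c : MvPolynomial (Fin 2) A) :
    homogeneousComponent 0 c = -coeff 0 c • coboundary (Polynomial.X ^ 0) := by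
  rw [homogeneousComponent_zero, coboundary_X_pow, smul_eq_C_mul, map_neg]
  ring

theorem exists_eq_coboundary_of_homogeneousComponent {c : MvPolynomial (Fin 2) A} {a : ℕ → A}
    (ha : ∀ m, homogeneousComponent m c = a m • coboundary (Polynomial.X ^ m)) :
    ∃ g, c = coboundary g := by
  refine ⟨∑ m ∈ range (c.totalDegree + 1), a m • Polynomial.X ^ m, ?_⟩
  simp_rw [map_sum, map_smul, ← ha, sum_homogeneousComponent]

variable (p : ℕ) [Fact p.Prime] [CharP A p]

theorem exists_homogeneousComponent_eq_smul_coboundary {c : MvPolynomial (Fin 2) A}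
    {f : Polynomial A} (hsplit : c - c ^ p = coboundary f) (m : ℕ) :
    ∃ a : A, homogeneousComponent m c = a • coboundary (Polynomial.X ^ m) := by
  induction m using Nat.strong_induction_on with
  | _ m ih =>
  have hm := congrArg (homogeneousComponent m) hsplit
  rw [map_sub, homogeneousComponent_coboundary] at hm
  rcases Nat.eq_zero_or_pos m with rfl | hpos
  · exact ⟨_, homogeneousComponent_zero_eq_smul_coboundary c⟩
  by_cases hdvd : p ∣ m
  · obtain ⟨n, rfl⟩ := exists_eq_mul_left_of_dvd hdvd
    obtain ⟨a, ha⟩ := ih n (by nlinarith [(Fact.out : p.Prime).two_le])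
    rw [homogeneousComponent_mul_expChar_pow, ha, smul_pow, coboundary_X_pow_pow_char] at hm
    exact ⟨f.coeff (n * p) + a ^ p, by rw [add_smul]; linear_combination hm⟩
  · rw [homogeneousComponent_pow_expChar_of_not_dvd p c hdvd] at hm
    exact ⟨f.coeff m, by linear_combination hm⟩

end Ga

theorem artinSchreier_pushout_split_implies_split_general
    (p : ℕ) [Fact p.Prime] {A : Type*} [CommRing A] [CharP A p]
    (c : MvPolynomial (Fin 2) A)
    -- the pushout along `1 − F` splits:
    (f : Polynomial A)
    (hsplit : c - c ^ p
        = Polynomial.aeval (MvPolynomial.X 0 + MvPolynomial.X 1 : MvPolynomial (Fin 2) A) f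
          - Polynomial.aeval (MvPolynomial.X 0 : MvPolynomial (Fin 2) A) f
          - Polynomial.aeval (MvPolynomial.X 1 : MvPolynomial (Fin 2) A) f) :
    ∃ g : Polynomial A,
      c = Polynomial.aeval (MvPolynomial.X 0 + MvPolynomial.X 1 : MvPolynomial (Fin 2) A) g
          - Polynomial.aeval (MvPolynomial.X 0 : MvPolynomial (Fin 2) A) g
          - Polynomial.aeval (MvPolynomial.X 1 : MvPolynomial (Fin 2) A) g := by
  choose a ha using Ga.exists_homogeneousComponent_eq_smul_coboundary p hsplit
  exact Ga.exists_eq_coboundary_of_homogeneousComponent ha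

/-- Let `A` be a perfect `𝔽_p`-algebra, `S = Spec A`. Every extension
of the fppf group scheme `G_{a,S}` by itself whose pushout along the Artin–Schreier
isogeny `t ↦ t − t^p` splits, is itself split.  In cocycle terms: extensions of
`G_{a,S}` by `G_{a,S}` are classified by symmetric 2-cocycles
`c(U₁,U₂) ∈ A[U₁,U₂]` modulo coboundaries `d(f)(U₁,U₂) = f(U₁+U₂) − f(U₁) − f(U₂)`,
and the pushout along `1 − F` has cocycle `c − c^p`; so the statement reads: if
`c − c^p` is a coboundary then so is `c`, i.e. `1 − F` is injective on
`Ext¹(G_{a,S}, G_{a,S})`. -/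
theorem artinSchreier_pushout_split_implies_split
    (p : ℕ) [Fact p.Prime] {A : Type*} [CommRing A] [CharP A p]
    [ExpChar A p] [PerfectRing A p]
    (c : MvPolynomial (Fin 2) A)
    -- symmetry of the cocycle:
    (hsym : MvPolynomial.rename (Equiv.swap (0 : Fin 2) 1) c = c)
    -- cocycle condition `c(U₁,U₂+U₃) + c(U₂,U₃) = c(U₁,U₂) + c(U₁+U₂,U₃)`:
    (hcoc : MvPolynomial.aeval
          ![(MvPolynomial.X 0 : MvPolynomial (Fin 3) A), MvPolynomial.X 1 + MvPolynomial.X 2] c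
        + MvPolynomial.aeval
          ![(MvPolynomial.X 1 : MvPolynomial (Fin 3) A), MvPolynomial.X 2] c
      = MvPolynomial.aeval
          ![(MvPolynomial.X 0 : MvPolynomial (Fin 3) A), MvPolynomial.X 1] c
        + MvPolynomial.aeval
          ![(MvPolynomial.X 0 + MvPolynomial.X 1 : MvPolynomial (Fin 3) A), MvPolynomial.X 2] c)
    -- the pushout along `1 − F` splits:
    (f : Polynomial A)
    (hsplit : c - c ^ p
        = Polynomial.aeval (MvPolynomial.X 0 + MvPolynomial.X 1 : MvPolynomial (Fin 2) A) f
          - Polynomial.aeval (MvPolynomial.X 0 : MvPolynomial (Fin 2) A) f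
          - Polynomial.aeval (MvPolynomial.X 1 : MvPolynomial (Fin 2) A) f) :
    ∃ g : Polynomial A,
      c = Polynomial.aeval (MvPolynomial.X 0 + MvPolynomial.X 1 : MvPolynomial (Fin 2) A) g
          - Polynomial.aeval (MvPolynomial.X 0 : MvPolynomial (Fin 2) A) g
          - Polynomial.aeval (MvPolynomial.X 1 : MvPolynomial (Fin 2) A) g :=
  artinSchreier_pushout_split_implies_split_general p c f hsplit
end

section
/- Let p = 2, A a perfect F_2-algebra, and G the A-group scheme with underlying scheme G_a × G_a and group law (t₁,u₁)+(t₂,u₂) = (t₁+t₂+u₁u₂, u₁+u₂) (Witt vectors of length 2). A pair (f₀,f₁) ∈ A[T,U]² defines a group-scheme endomorphism of G if and only if there exist additive polynomials a(U) = Σ_r a_r U^{2^r} and b(U) such that f₁(T,U) = a(U) and f₀(T,U) = Σ_r a_r² T^{2^r} + Σ_{r₁>r₂≥0} a_{r₁} a_{r₂} U^{2^{r₁}+2^{r₂}} + b(U). -/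
/-
A homomorphism `F : W₂ → 𝔾ₐ` only depends on `U`: evaluating the homomorphism property at
`(t, 0) + (0, u)` and `(0, u) + (0, u) = (u², 0)` gives `F(t, u) = F(t, 0) + F(0, u)` and
`F(u², 0) = 0`. Then `(0, u) + (0, v) = (uv, u + v)` shows that `q(U) = F(0, U)` is an additive
polynomial, hence `q = Σ a_r U^(2^r)`, since some `binom(n, i)` with `0 < i < n` is odd unless `n`
is a power of two. This classifies `f₁`. For `f₀`, the Frobenius and the expansion
`a(U₁) a(U₂) = Σ a_r² (U₁U₂)^(2^r) + Σ_{r>s} a_r a_s (U₁^(2^r) U₂^(2^s) + U₁^(2^s) U₂^(2^r))` show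
that `Q = Σ a_r² T^(2^r) + Σ_{r>s} a_r a_s U^(2^r+2^s)` satisfies the first equation, so `f₀ - Q` is
again a homomorphism `W₂ → 𝔾ₐ`.
-/

namespace Polynomial

theorem hasseDeriv_map {R S : Type*} [Semiring R] [Semiring S] (f : R →+* S) (q : R[X])
    (k : ℕ) :
    hasseDeriv k (q.map f) = (hasseDeriv k q).map f := by
  ext n
  simp [hasseDeriv_coeff]

variable {R : Type*}

section CommSemiring

variable [CommSemiring R]

theorem aeval_eq_comp_map_C (q : R[X]) (y : R[X][X]) : aeval y q = (q.map C).comp y := by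
  rw [comp_eq_aeval, ← algebraMap_eq, aeval_map_algebraMap]

/-- `q(x + y) = q(x) + q(y)`, with `x = C X` and `y = X` in `R[X][X]`. -/
def IsAdditive (q : R[X]) : Prop :=
  aeval (X + C X : R[X][X]) q = aeval X q + aeval (C X) q

theorem IsAdditive.hasseDeriv_eq {q : R[X]} (hq : q.IsAdditive) (m : ℕ) :
    hasseDeriv m q = C (q.coeff m) + if m = 0 then q else 0 := by
  rw [IsAdditive] at hq
  simp only [aeval_eq_comp_map_C, comp_X, comp_C, eval_map, eval₂_C_X, ← taylor_apply] at hq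
  simpa [taylor_coeff, coeff_C, hasseDeriv_map, eval_map, eval₂_C_X] using
    congrArg (coeff · m) hq

end CommSemiring

namespace IsAdditive

variable [CommRing R] (p : ℕ) [Fact p.Prime] [CharP R p] {q : R[X]}

theorem coeff_eq_zero (hq : q.IsAdditive) {n : ℕ} (hn : ∀ r, n ≠ p ^ r) : q.coeff n = 0 := by
  rcases eq_or_ne n 0 with rfl | hn0
  · simpa using congrArg (coeff · 0) (hq.hasseDeriv_eq 0)
  -- The coefficient `n.choose i * q.coeff n` of `x^(n-i) y^i` in `q(x + y)` vanishes for
  -- `0 < i < n`; by Lucas's theorem `p` divides all these `n.choose i` only if `n` is a power of `p`.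
  by_contra hqn
  refine hn _ (Choose.eq_pow_multiplicity_of_choose_modEq_zero_nat (Nat.pos_of_ne_zero hn0)
    fun i hi => ?_)
  obtain ⟨hi0, hin⟩ := Finset.mem_Icc.mp hi
  have h := congrArg (coeff · (n - i)) (hq.hasseDeriv_eq i)
  simp only [hasseDeriv_coeff, Nat.sub_add_cancel (hin.trans (n.sub_le 1)), coeff_C,
    if_neg (Nat.one_le_iff_ne_zero.mp hi0), if_neg (by omega : n - i ≠ 0), add_zero] at h
  rw [Nat.modEq_zero_iff_dvd, ← not_not (a := p ∣ _),
    ← CharP.isUnit_natCast_iff (R := R) Fact.out]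
  exact fun hu => hqn (hu.mul_right_eq_zero.mp h)

theorem eq_sum_X_pow_pow (hq : q.IsAdditive) {N : ℕ} (hN : q.natDegree < N) :
    q = ∑ r ∈ Finset.range N, C (q.coeff (p ^ r)) * X ^ p ^ r := by
  have hp : p.Prime := Fact.out
  ext n
  simp only [finsetSum_coeff, coeff_C_mul, coeff_X_pow, mul_ite, mul_one, mul_zero]
  by_cases hn : ∃ r, n = p ^ r
  · obtain ⟨r, rfl⟩ := hn
    have hinj : Function.Injective (p ^ · : ℕ → ℕ) := Nat.pow_right_injective hp.two_le
    rw [Finset.sum_eq_single r (fun s _ hsr => if_neg (hinj.ne hsr.symm)), if_pos rfl]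
    intro hr
    rw [Finset.mem_range, not_lt] at hr
    rw [if_pos rfl,
      coeff_eq_zero_of_natDegree_lt (hN.trans_le (hr.trans (Nat.lt_pow_self hp.one_lt).le))]
  · push Not at hn
    rw [hq.coeff_eq_zero p hn, Finset.sum_eq_zero fun r _ => if_neg (hn r)]

end IsAdditive

end Polynomial

namespace MvPolynomial

variable {A S S' : Type*} [CommSemiring A] [CommSemiring S] [CommSemiring S'] [Algebra A S]
  [Algebra A S']

theorem comp_aeval_apply_fin_two (φ : S →ₐ[A] S') (x y : S) (F : MvPolynomial (Fin 2) A) :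
    φ (aeval ![x, y] F) = aeval ![φ x, φ y] F := by
  rw [comp_aeval_apply]
  congr 2 with i
  fin_cases i <;> rfl

theorem aeval_X_fin_two (F : MvPolynomial (Fin 2) A) : aeval ![X 0, X 1] F = F := by
  convert aeval_X_left_apply F
  ext i
  fin_cases i <;> rfl

end MvPolynomial

namespace WittLengthTwo

section CharTwoRing

variable {R : Type*} [CommRing R] [CharP R 2]

theorem sum_mul_add_pow_two_pow (c : ℕ → R) (N : ℕ) (u u' : R) :
    ∑ r ∈ Finset.range N, c r * (u + u') ^ 2 ^ r
      = ∑ r ∈ Finset.range N, c r * u ^ 2 ^ r + ∑ r ∈ Finset.range N, c r * u' ^ 2 ^ r := by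
  rw [← Finset.sum_add_distrib]
  exact Finset.sum_congr rfl fun r _ => by rw [add_pow_char_pow, mul_add]

theorem quadratic_sum_add (a : ℕ → R) (N : ℕ) (t t' u u' : R) :
    ∑ r ∈ Finset.range N, a r ^ 2 * (t + t' + u * u') ^ 2 ^ r
        + ∑ r ∈ Finset.range N, ∑ s ∈ Finset.range r, a r * a s * (u + u') ^ (2 ^ r + 2 ^ s)
      = (∑ r ∈ Finset.range N, a r ^ 2 * t ^ 2 ^ r
          + ∑ r ∈ Finset.range N, ∑ s ∈ Finset.range r, a r * a s * u ^ (2 ^ r + 2 ^ s))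
        + (∑ r ∈ Finset.range N, a r ^ 2 * t' ^ 2 ^ r
          + ∑ r ∈ Finset.range N, ∑ s ∈ Finset.range r, a r * a s * u' ^ (2 ^ r + 2 ^ s))
        + (∑ r ∈ Finset.range N, a r * u ^ 2 ^ r) * ∑ r ∈ Finset.range N, a r * u' ^ 2 ^ r := by
  induction N with
  | zero => simp
  | succ N ih =>
    have hdiag : a N ^ 2 * (t + t' + u * u') ^ 2 ^ N
        = a N ^ 2 * t ^ 2 ^ N + a N ^ 2 * t' ^ 2 ^ N + a N * u ^ 2 ^ N * (a N * u' ^ 2 ^ N) := by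
      rw [add_pow_char_pow, add_pow_char_pow, mul_pow]
      ring
    have hcross : ∑ s ∈ Finset.range N, a N * a s * (u + u') ^ (2 ^ N + 2 ^ s)
        = ∑ s ∈ Finset.range N, a N * a s * u ^ (2 ^ N + 2 ^ s)
          + ∑ s ∈ Finset.range N, a N * a s * u' ^ (2 ^ N + 2 ^ s)
          + a N * u ^ 2 ^ N * ∑ s ∈ Finset.range N, a s * u' ^ 2 ^ s
          + (∑ s ∈ Finset.range N, a s * u ^ 2 ^ s) * (a N * u' ^ 2 ^ N) := by
      rw [Finset.mul_sum, Finset.sum_mul, ← Finset.sum_add_distrib, ← Finset.sum_add_distrib,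
        ← Finset.sum_add_distrib]
      refine Finset.sum_congr rfl fun s _ => ?_
      rw [pow_add, pow_add, pow_add, add_pow_char_pow, add_pow_char_pow]
      ring
    simp only [Finset.sum_range_succ]
    linear_combination ih + hdiag + hcross

end CharTwoRing

open MvPolynomial

variable {A : Type*} [CommRing A]

/-- `F ∈ A[T, U]` (`T = X 0`, `U = X 1`) is primitive for the comultiplication
`T ↦ T₁ + T₂ + U₁U₂`, `U ↦ U₁ + U₂` of `W₂`, i.e. it is a homomorphism `W₂ → 𝔾ₐ`. -/
def IsPrimitive (F : MvPolynomial (Fin 2) A) : Prop :=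
  aeval ![X 0 + X 2 + X 1 * X 3, X 1 + X 3] F
    = aeval ![(X 0 : MvPolynomial (Fin 4) A), X 1] F + aeval ![X 2, X 3] F

noncomputable def additivePoly (N : ℕ) (c : ℕ → A) : MvPolynomial (Fin 2) A :=
  ∑ r ∈ Finset.range N, C (c r) * X 1 ^ 2 ^ r

theorem additivePoly_eq_of_le {N M : ℕ} {c : ℕ → A} (hc : ∀ r ≥ N, c r = 0) (hNM : N ≤ M) :
    additivePoly M c = additivePoly N c :=
  Finset.eventually_constant_sum (fun r hr => by simp [hc r hr]) hNM

namespace IsPrimitive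

variable {F : MvPolynomial (Fin 2) A}

theorem aeval_add (hF : IsPrimitive F) {S : Type*} [CommSemiring S] [Algebra A S]
    (x y x' y' : S) :
    aeval ![x + x' + y * y', y + y'] F = aeval ![x, y] F + aeval ![x', y'] F := by
  have h := congrArg (aeval ![x, y, x', y']) hF
  rw [map_add, comp_aeval_apply_fin_two, comp_aeval_apply_fin_two, comp_aeval_apply_fin_two] at h
  simpa using h

variable [CharP A 2]

theorem aeval_eq_aeval_zero (hF : IsPrimitive F) {S : Type*} [CommSemiring S] [Algebra A S]
    (x y : S) :
    aeval ![x, y] F = aeval ![0, y] F := by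
  have hsplit := hF.aeval_add 0 y x 0
  simp only [zero_add, mul_zero, add_zero] at hsplit
  have hX : aeval ![(Polynomial.X : Polynomial A), 0] F = 0 := by
    apply Polynomial.expand_injective two_pos
    have hsq := hF.aeval_add 0 (Polynomial.X : Polynomial A) 0 Polynomial.X
    rw [zero_add, zero_add, CharTwo.add_self_eq_zero, CharTwo.add_self_eq_zero] at hsq
    rw [comp_aeval_apply_fin_two, map_zero, Polynomial.expand_X, sq]
    exact hsq
  have hx := comp_aeval_apply_fin_two (Polynomial.aeval x) Polynomial.X 0 F
  rw [hX, map_zero, Polynomial.aeval_X] at hx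
  rw [hsplit, ← hx, add_zero]

theorem aeval_eq_polynomial_aeval (hF : IsPrimitive F) {S : Type*} [CommSemiring S]
    [Algebra A S] (x y : S) :
    aeval ![x, y] F = Polynomial.aeval y (aeval ![0, (Polynomial.X : Polynomial A)] F) := by
  rw [hF.aeval_eq_aeval_zero, comp_aeval_apply_fin_two, map_zero, Polynomial.aeval_X]

theorem isAdditive_aeval_zero_X (hF : IsPrimitive F) :
    (aeval ![0, (Polynomial.X : Polynomial A)] F).IsAdditive := by
  have h := hF.aeval_add 0 (Polynomial.X : Polynomial (Polynomial A)) 0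
    (Polynomial.C Polynomial.X)
  rw [hF.aeval_eq_aeval_zero (0 + 0 + _)] at h
  rw [Polynomial.IsAdditive, ← hF.aeval_eq_polynomial_aeval 0,
    ← hF.aeval_eq_polynomial_aeval 0, ← hF.aeval_eq_polynomial_aeval 0]
  exact h

theorem exists_eq_additivePoly (hF : IsPrimitive F) :
    ∃ (N : ℕ) (c : ℕ → A), (∀ r ≥ N, c r = 0) ∧ F = additivePoly N c := by
  have hFq : F = Polynomial.aeval (X 1) (aeval ![0, (Polynomial.X : Polynomial A)] F) := by
    rw [← hF.aeval_eq_polynomial_aeval (X 0), aeval_X_fin_two]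
  have hq := hF.isAdditive_aeval_zero_X
  generalize aeval ![0, (Polynomial.X : Polynomial A)] F = q at hq hFq
  refine ⟨q.natDegree + 1, fun r => q.coeff (2 ^ r), fun r hr => ?_, ?_⟩
  · exact Polynomial.coeff_eq_zero_of_natDegree_lt (by have := r.lt_two_pow_self; omega)
  · conv_lhs => rw [hFq, hq.eq_sum_X_pow_pow 2 q.natDegree.lt_succ_self]
    simp [additivePoly]

end IsPrimitive

noncomputable def zerothComponent (N : ℕ) (a : ℕ → A) : MvPolynomial (Fin 2) A :=
  (∑ r ∈ Finset.range N, C (a r ^ 2) * X 0 ^ 2 ^ r)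
    + ∑ r ∈ Finset.range N, ∑ s ∈ Finset.range r, C (a r * a s) * X 1 ^ (2 ^ r + 2 ^ s)

theorem zerothComponent_eq_of_le {N M : ℕ} {a : ℕ → A} (ha : ∀ r ≥ N, a r = 0) (hNM : N ≤ M) :
    zerothComponent M a = zerothComponent N a := by
  rw [zerothComponent, zerothComponent,
    Finset.eventually_constant_sum (fun r hr => by simp [ha r hr]) hNM,
    Finset.eventually_constant_sum (fun r hr => by simp [ha r hr]) hNM]

variable [CharP A 2]

theorem isPrimitive_additivePoly (N : ℕ) (c : ℕ → A) : IsPrimitive (additivePoly N c) := by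
  simp only [IsPrimitive, additivePoly, map_sum, map_mul, map_pow, aeval_C, aeval_X,
    algebraMap_eq, Matrix.cons_val_zero, Matrix.cons_val_one]
  exact sum_mul_add_pow_two_pow _ N _ _

theorem aeval_zerothComponent (N : ℕ) (a : ℕ → A) :
    aeval ![X 0 + X 2 + X 1 * X 3, X 1 + X 3] (zerothComponent N a)
      = aeval ![(X 0 : MvPolynomial (Fin 4) A), X 1] (zerothComponent N a)
        + aeval ![X 2, X 3] (zerothComponent N a)
        + aeval ![(X 0 : MvPolynomial (Fin 4) A), X 1] (additivePoly N a)
          * aeval ![X 2, X 3] (additivePoly N a) := by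
  simp only [zerothComponent, additivePoly, map_add, map_sum, map_mul, map_pow, aeval_C, aeval_X,
    algebraMap_eq, Matrix.cons_val_zero, Matrix.cons_val_one]
  exact quadratic_sum_add _ N _ _ _ _

theorem isPrimitive_sub_zerothComponent_iff (f₀ : MvPolynomial (Fin 2) A) (N : ℕ)
    (a : ℕ → A) :
    IsPrimitive (f₀ - zerothComponent N a) ↔
      aeval ![X 0 + X 2 + X 1 * X 3, X 1 + X 3] f₀
        = aeval ![(X 0 : MvPolynomial (Fin 4) A), X 1] f₀ + aeval ![X 2, X 3] f₀
          + aeval ![(X 0 : MvPolynomial (Fin 4) A), X 1] (additivePoly N a)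
            * aeval ![X 2, X 3] (additivePoly N a) := by
  have hQ := aeval_zerothComponent N a
  rw [IsPrimitive, map_sub, map_sub, map_sub]
  constructor <;> intro h
  · linear_combination h + hQ
  · linear_combination h - hQ

end WittLengthTwo

open WittLengthTwo

theorem witt_length_two_endomorphisms_general
    {A : Type*} [CommRing A] [CharP A 2]
    (f₀ f₁ : MvPolynomial (Fin 2) A) :
    -- the endomorphism equations in `A[T₁,U₁,T₂,U₂]` (variables `X 0, X 1, X 2, X 3`):
    ((MvPolynomial.aeval
          ![(MvPolynomial.X 0 + MvPolynomial.X 2 + MvPolynomial.X 1 * MvPolynomial.X 3 :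
              MvPolynomial (Fin 4) A), MvPolynomial.X 1 + MvPolynomial.X 3] f₀
        = MvPolynomial.aeval
            ![(MvPolynomial.X 0 : MvPolynomial (Fin 4) A), MvPolynomial.X 1] f₀
          + MvPolynomial.aeval
            ![(MvPolynomial.X 2 : MvPolynomial (Fin 4) A), MvPolynomial.X 3] f₀
          + MvPolynomial.aeval
              ![(MvPolynomial.X 0 : MvPolynomial (Fin 4) A), MvPolynomial.X 1] f₁
            * MvPolynomial.aeval
              ![(MvPolynomial.X 2 : MvPolynomial (Fin 4) A), MvPolynomial.X 3] f₁)
      ∧ (MvPolynomial.aeval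
          ![(MvPolynomial.X 0 + MvPolynomial.X 2 + MvPolynomial.X 1 * MvPolynomial.X 3 :
              MvPolynomial (Fin 4) A), MvPolynomial.X 1 + MvPolynomial.X 3] f₁
        = MvPolynomial.aeval
            ![(MvPolynomial.X 0 : MvPolynomial (Fin 4) A), MvPolynomial.X 1] f₁
          + MvPolynomial.aeval
            ![(MvPolynomial.X 2 : MvPolynomial (Fin 4) A), MvPolynomial.X 3] f₁))
    ↔ ∃ (N : ℕ) (a b : ℕ → A),
        f₁ = ∑ r ∈ Finset.range N, MvPolynomial.C (a r) * MvPolynomial.X 1 ^ 2 ^ r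
        ∧ f₀ = (∑ r ∈ Finset.range N,
              MvPolynomial.C (a r ^ 2) * MvPolynomial.X 0 ^ 2 ^ r)
            + (∑ r ∈ Finset.range N, ∑ s ∈ Finset.range r,
              MvPolynomial.C (a r * a s) * MvPolynomial.X 1 ^ (2 ^ r + 2 ^ s))
            + ∑ r ∈ Finset.range N,
              MvPolynomial.C (b r) * MvPolynomial.X 1 ^ 2 ^ r := by
  constructor
  · rintro ⟨h₀, h₁⟩
    obtain ⟨N₁, a, ha, rfl⟩ := IsPrimitive.exists_eq_additivePoly h₁
    obtain ⟨N₂, b, hb, hf₀⟩ :=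
      ((isPrimitive_sub_zerothComponent_iff f₀ N₁ a).mpr h₀).exists_eq_additivePoly
    refine ⟨N₁ + N₂, a, b, (additivePoly_eq_of_le ha (N₁.le_add_right N₂)).symm, ?_⟩
    show f₀ = zerothComponent (N₁ + N₂) a + additivePoly (N₁ + N₂) b
    rw [zerothComponent_eq_of_le ha (N₁.le_add_right N₂),
      additivePoly_eq_of_le hb (N₂.le_add_left N₁), ← hf₀, add_sub_cancel]
  · rintro ⟨N, a, b, rfl, rfl⟩
    have hb : IsPrimitive (zerothComponent N a + additivePoly N b - zerothComponent N a) := by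
      rw [add_sub_cancel_left]
      exact isPrimitive_additivePoly N b
    exact ⟨(isPrimitive_sub_zerothComponent_iff _ N a).mp hb, isPrimitive_additivePoly N a⟩

/-- Let `p = 2`, `A` a perfect `𝔽_2`-algebra, and `G` the `A`-group
scheme with underlying scheme `G_a × G_a` and group law
`(t₁,u₁)+(t₂,u₂) = (t₁+t₂+u₁u₂, u₁+u₂)` (Witt vectors of length 2). A pair
`(f₀,f₁) ∈ A[T,U]²` (here `T = X 0`, `U = X 1` in `MvPolynomial (Fin 2) A`) defines a
group-scheme endomorphism of `G` if and only if there exist additive polynomials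
`a(U) = Σ_r a_r U^{2^r}` and `b(U) = Σ_r b_r U^{2^r}` with `f₁(T,U) = a(U)` and
`f₀(T,U) = Σ_r a_r² T^{2^r} + Σ_{r₁>r₂≥0} a_{r₁}a_{r₂} U^{2^{r₁}+2^{r₂}} + b(U)`. -/
theorem witt_length_two_endomorphisms
    {A : Type*} [CommRing A] [CharP A 2] [ExpChar A 2] [PerfectRing A 2]
    (f₀ f₁ : MvPolynomial (Fin 2) A) :
    -- the endomorphism equations in `A[T₁,U₁,T₂,U₂]` (variables `X 0, X 1, X 2, X 3`):
    ((MvPolynomial.aeval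
          ![(MvPolynomial.X 0 + MvPolynomial.X 2 + MvPolynomial.X 1 * MvPolynomial.X 3 :
              MvPolynomial (Fin 4) A), MvPolynomial.X 1 + MvPolynomial.X 3] f₀
        = MvPolynomial.aeval
            ![(MvPolynomial.X 0 : MvPolynomial (Fin 4) A), MvPolynomial.X 1] f₀
          + MvPolynomial.aeval
            ![(MvPolynomial.X 2 : MvPolynomial (Fin 4) A), MvPolynomial.X 3] f₀
          + MvPolynomial.aeval
              ![(MvPolynomial.X 0 : MvPolynomial (Fin 4) A), MvPolynomial.X 1] f₁
            * MvPolynomial.aeval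
              ![(MvPolynomial.X 2 : MvPolynomial (Fin 4) A), MvPolynomial.X 3] f₁)
      ∧ (MvPolynomial.aeval
          ![(MvPolynomial.X 0 + MvPolynomial.X 2 + MvPolynomial.X 1 * MvPolynomial.X 3 :
              MvPolynomial (Fin 4) A), MvPolynomial.X 1 + MvPolynomial.X 3] f₁
        = MvPolynomial.aeval
            ![(MvPolynomial.X 0 : MvPolynomial (Fin 4) A), MvPolynomial.X 1] f₁
          + MvPolynomial.aeval
            ![(MvPolynomial.X 2 : MvPolynomial (Fin 4) A), MvPolynomial.X 3] f₁))
    ↔ ∃ (N : ℕ) (a b : ℕ → A),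
        f₁ = ∑ r ∈ Finset.range N, MvPolynomial.C (a r) * MvPolynomial.X 1 ^ 2 ^ r
        ∧ f₀ = (∑ r ∈ Finset.range N,
              MvPolynomial.C (a r ^ 2) * MvPolynomial.X 0 ^ 2 ^ r)
            + (∑ r ∈ Finset.range N, ∑ s ∈ Finset.range r,
              MvPolynomial.C (a r * a s) * MvPolynomial.X 1 ^ (2 ^ r + 2 ^ s))
            + ∑ r ∈ Finset.range N,
              MvPolynomial.C (b r) * MvPolynomial.X 1 ^ 2 ^ r :=
  witt_length_two_endomorphisms_general f₀ f₁
end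

section
/- Let O be a henselian discrete valuation ring containing its residue field κ (a field of char p), with fraction field K, maximal ideal m, and let D = Spec(O/m^ν) for some ν ≥ 1. Then the kernel I of the multiplication map O ⊗_κ (O/m^ν) → O/m^ν is a principal invertible ideal, generated by π⊗1 − 1⊗π for any uniformizer π, and I generates the unit ideal of K ⊗_κ (O/m^ν). -/
/-!
Write `d a = a ⊗ 1 - 1 ⊗ ā` in `A = O ⊗_κ O/m^ν`. The elements `a` with `d a ∈ (d π)` are those on
which the two structure maps `O → A/(d π)` agree, so they form a `κ`-subalgebra containing `π`.
Both maps kill `π^ν` (the second one does so already in `A`), and `O = κ[π] + (π^ν)` because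
`κ` is a section of the residue field; hence the two maps agree everywhere, and since every
`z ∈ A` is congruent to `1 ⊗ μ(z)` modulo the `d a`, the kernel of `μ` is `(d π)`. In
`K ⊗_κ O/m^ν` the image of `d π` is the unit `π ⊗ 1` minus the nilpotent `1 ⊗ π̄`, and
`O ⊗_κ O/m^ν → K ⊗_κ O/m^ν` is injective by flatness over the field `κ`, so `d π` is
a nonzerodivisor.
-/

open scoped TensorProduct

open Algebra.TensorProduct

theorem AlgHom.eq_of_eqOn_adjoin_add_ideal {κ R Q : Type*} [CommRing κ] [CommRing R]
    [Ring Q] [Algebra κ R] [Algebra κ Q] {φ ψ : R →ₐ[κ] Q} {s : Set R} {I : Ideal R}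
    (hR : ∀ b, ∃ p ∈ Algebra.adjoin κ s, b - p ∈ I) (hs : Set.EqOn φ ψ s)
    (hI : Set.EqOn φ ψ I) : φ = ψ := by
  ext b
  obtain ⟨p, hp, hbp⟩ := hR b
  have hpφψ : φ p = ψ p := AlgHom.eqOn_adjoin_iff.mpr hs hp
  calc φ b = φ p + φ (b - p) := by rw [← map_add, add_sub_cancel]
    _ = ψ p + ψ (b - p) := by rw [hpφψ, hI hbp]
    _ = ψ b := by rw [← map_add, add_sub_cancel]

theorem IsLocalRing.exists_mem_adjoin_sub_mem_span_pow {κ R : Type*} [CommRing κ] [CommRing R]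
    [IsLocalRing R] [Algebra κ R]
    (hres : Function.Surjective ((IsLocalRing.residue R).comp (algebraMap κ R)))
    {π : R} (hπ : IsLocalRing.maximalIdeal R = Ideal.span {π}) (n : ℕ) (b : R) :
    ∃ p ∈ Algebra.adjoin κ {π}, b - p ∈ Ideal.span {π ^ n} := by
  induction n with
  | zero => exact ⟨0, zero_mem _, by simp⟩
  | succ n ih =>
    obtain ⟨p, hp, hbp⟩ := ih
    obtain ⟨c, hc⟩ := Ideal.mem_span_singleton'.mp hbp
    obtain ⟨u, hu⟩ := hres (IsLocalRing.residue R c)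
    have hcu : c - algebraMap κ R u ∈ Ideal.span {π} := by
      rw [← hπ, ← IsLocalRing.residue_eq_zero_iff, map_sub, ← RingHom.comp_apply, hu, sub_self]
    obtain ⟨c', hc'⟩ := Ideal.mem_span_singleton'.mp hcu
    refine ⟨p + algebraMap κ R u * π ^ n,
      add_mem hp (mul_mem (Subalgebra.algebraMap_mem _ u)
        (pow_mem (Algebra.subset_adjoin (Set.mem_singleton π)) n)),
      Ideal.mem_span_singleton'.mpr ⟨c', ?_⟩⟩
    linear_combination π ^ n * hc' + hc

section Diagonal

variable {κ R B : Type*} [CommRing κ] [CommRing R] [CommRing B] [Algebra κ R] [Algebra κ B]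

theorem sub_one_tmul_productMap_mem_span (f : R →ₐ[κ] B) (z : R ⊗[κ] B) :
    z - 1 ⊗ₜ productMap f (AlgHom.id κ B) z
      ∈ Ideal.span (Set.range fun a : R ↦ a ⊗ₜ[κ] (1 : B) - 1 ⊗ₜ f a) := by
  induction z using TensorProduct.induction_on with
  | zero => simp
  | tmul a b =>
    have h : a ⊗ₜ b - 1 ⊗ₜ productMap f (AlgHom.id κ B) (a ⊗ₜ b)
        = (1 ⊗ₜ b) * (a ⊗ₜ[κ] (1 : B) - 1 ⊗ₜ f a) := by
      simp [mul_sub, mul_comm b]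
    rw [h]
    exact Ideal.mul_mem_left _ _ (Ideal.subset_span ⟨a, rfl⟩)
  | add x y hx hy =>
    rw [map_add, TensorProduct.tmul_add, add_sub_add_comm]
    exact add_mem hx hy

theorem ker_productMap_id_eq_span (f : R →ₐ[κ] B) :
    RingHom.ker (productMap f (AlgHom.id κ B))
      = Ideal.span (Set.range fun a : R ↦ a ⊗ₜ[κ] (1 : B) - 1 ⊗ₜ f a) := by
  refine le_antisymm (fun z hz ↦ ?_) (Ideal.span_le.mpr ?_)
  · simpa [(RingHom.mem_ker).mp hz] using sub_one_tmul_productMap_mem_span f z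
  · rintro _ ⟨a, rfl⟩
    simp

theorem tmul_one_sub_one_tmul_mem_span_singleton (f : R →ₐ[κ] B) {π : R} {n : ℕ}
    (hπn : f (π ^ n) = 0) (hR : ∀ b, ∃ p ∈ Algebra.adjoin κ {π}, b - p ∈ Ideal.span {π ^ n})
    (a : R) :
    a ⊗ₜ[κ] (1 : B) - 1 ⊗ₜ f a ∈ Ideal.span {π ⊗ₜ[κ] (1 : B) - 1 ⊗ₜ f π} := by
  set J := Ideal.span {π ⊗ₜ[κ] (1 : B) - 1 ⊗ₜ f π}
  set φ := (Ideal.Quotient.mkₐ κ J).comp (includeLeft (S := κ))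
  set ψ := (Ideal.Quotient.mkₐ κ J).comp ((includeRight (A := R)).comp f)
  have hπ : φ π = ψ π := Ideal.Quotient.eq.mpr (Ideal.mem_span_singleton_self _)
  have hψ : ψ (π ^ n) = 0 := by simp [ψ, hπn]
  have hφ : φ (π ^ n) = 0 := by rw [map_pow, hπ, ← map_pow, hψ]
  have hI : Set.EqOn φ ψ (Ideal.span {π ^ n}) := by
    intro x hx
    obtain ⟨c, rfl⟩ := Ideal.mem_span_singleton'.mp hx
    rw [map_mul, map_mul, hφ, hψ, mul_zero, mul_zero]
  have hφψ : φ = ψ :=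
    AlgHom.eq_of_eqOn_adjoin_add_ideal hR (Set.eqOn_singleton.mpr hπ) hI
  exact Ideal.Quotient.eq.mp (DFunLike.congr_fun hφψ a)

theorem ker_productMap_id_eq_span_singleton (f : R →ₐ[κ] B) {π : R} {n : ℕ}
    (hπn : f (π ^ n) = 0) (hR : ∀ b, ∃ p ∈ Algebra.adjoin κ {π}, b - p ∈ Ideal.span {π ^ n}) :
    RingHom.ker (productMap f (AlgHom.id κ B))
      = Ideal.span {π ⊗ₜ[κ] (1 : B) - 1 ⊗ₜ f π} := by
  rw [ker_productMap_id_eq_span]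
  refine le_antisymm (Ideal.span_le.mpr ?_) (Ideal.span_mono ?_)
  · rintro _ ⟨a, rfl⟩
    exact tmul_one_sub_one_tmul_mem_span_singleton f hπn hR a
  · exact Set.singleton_subset_iff.mpr ⟨π, rfl⟩

end Diagonal

theorem isUnit_tmul_one_sub_one_tmul {κ A B : Type*} [CommRing κ] [CommRing A] [CommRing B]
    [Algebra κ A] [Algebra κ B] {x : A} {y : B} (hx : IsUnit x) (hy : IsNilpotent y) :
    IsUnit (x ⊗ₜ[κ] (1 : B) - 1 ⊗ₜ y) := by
  have hy' : IsNilpotent (-((1 : A) ⊗ₜ[κ] y)) :=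
    (hy.map (includeRight : B →ₐ[κ] A ⊗[κ] B)).neg
  rw [sub_eq_add_neg]
  exact hy'.isUnit_add_left_of_commute (hx.map (includeLeft : A →ₐ[κ] A ⊗[κ] B)) (Commute.all _ _)

theorem diagonal_ideal_invertible_general
    {κ O K : Type*} [Field κ] [CommRing O] [IsDomain O]
    [IsDiscreteValuationRing O]
    [Algebra κ O] [Field K] [Algebra O K] [IsFractionRing O K]
    [Algebra κ K] [IsScalarTower κ O K]
    (hres : Function.Bijective ((IsLocalRing.residue O).comp (algebraMap κ O)))
    (ν : ℕ) (π : O) (hπ : Irreducible π) :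
    (RingHom.ker (Algebra.TensorProduct.productMap
          (Ideal.Quotient.mkₐ κ (IsLocalRing.maximalIdeal O ^ ν))
          (AlgHom.id κ (O ⧸ IsLocalRing.maximalIdeal O ^ ν))).toRingHom
        = Ideal.span {π ⊗ₜ[κ] (1 : O ⧸ IsLocalRing.maximalIdeal O ^ ν)
            - 1 ⊗ₜ[κ] (Ideal.Quotient.mk (IsLocalRing.maximalIdeal O ^ ν) π)})
    ∧ (π ⊗ₜ[κ] (1 : O ⧸ IsLocalRing.maximalIdeal O ^ ν)
          - 1 ⊗ₜ[κ] (Ideal.Quotient.mk (IsLocalRing.maximalIdeal O ^ ν) π))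
        ∈ nonZeroDivisors (O ⊗[κ] (O ⧸ IsLocalRing.maximalIdeal O ^ ν))
    ∧ IsUnit ((Algebra.TensorProduct.map (IsScalarTower.toAlgHom κ O K)
          (AlgHom.id κ (O ⧸ IsLocalRing.maximalIdeal O ^ ν)))
        (π ⊗ₜ[κ] (1 : O ⧸ IsLocalRing.maximalIdeal O ^ ν)
          - 1 ⊗ₜ[κ] (Ideal.Quotient.mk (IsLocalRing.maximalIdeal O ^ ν) π))) := by
  set I := IsLocalRing.maximalIdeal O ^ ν
  have hm : IsLocalRing.maximalIdeal O = Ideal.span {π} :=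
    (IsDiscreteValuationRing.irreducible_iff_uniformizer π).mp hπ
  have hπν : Ideal.Quotient.mkₐ κ I (π ^ ν) = 0 := by
    rw [Ideal.Quotient.mkₐ_eq_mk, Ideal.Quotient.eq_zero_iff_mem]
    exact Ideal.pow_mem_pow (hm ▸ Ideal.mem_span_singleton_self π) ν
  have hinj : Function.Injective
      (Algebra.TensorProduct.map (IsScalarTower.toAlgHom κ O K) (AlgHom.id κ (O ⧸ I))) :=
    TensorProduct.map_injective_of_flat_flat _ _ (IsFractionRing.injective O K)
      Function.injective_id
  refine ⟨ker_productMap_id_eq_span_singleton _ hπν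
      (IsLocalRing.exists_mem_adjoin_sub_mem_span_pow hres.2 hm ν),
    mem_nonZeroDivisors_of_injective hinj (IsUnit.mem_nonZeroDivisors ?unit), ?unit⟩
  rw [map_sub, map_tmul, map_tmul, map_one, map_one]
  refine isUnit_tmul_one_sub_one_tmul (isUnit_iff_ne_zero.mpr ?_) ⟨ν, ?_⟩
  · rw [IsScalarTower.coe_toAlgHom']
    exact (map_ne_zero_iff _ (IsFractionRing.injective O K)).mpr hπ.ne_zero
  · rw [AlgHom.id_apply, ← map_pow]
    exact hπν

/-- Let `O` be an (equicharacteristic) henselian discrete valuation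
ring containing its residue field `κ` (i.e. `O` is a `κ`-algebra and `κ → O → O/m` is
bijective), with fraction field `K` and maximal ideal `m`, and let `D = Spec (O/m^ν)`
for some `ν ≥ 1`. Then the kernel `I` of the multiplication map
`O ⊗_κ (O/m^ν) → O/m^ν` is a principal invertible ideal, generated by
`π ⊗ 1 − 1 ⊗ π` for any uniformizer `π` (and this generator is a nonzerodivisor), and
`I` generates the unit ideal of `K ⊗_κ (O/m^ν)` (the generator becomes a unit). -/
theorem diagonal_ideal_invertible
    {κ O K : Type*} [Field κ] [CommRing O] [IsDomain O]
    [IsDiscreteValuationRing O] [HenselianLocalRing O]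
    [Algebra κ O] [Field K] [Algebra O K] [IsFractionRing O K]
    [Algebra κ K] [IsScalarTower κ O K]
    (hres : Function.Bijective ((IsLocalRing.residue O).comp (algebraMap κ O)))
    (ν : ℕ) (hν : 1 ≤ ν) (π : O) (hπ : Irreducible π) :
    (RingHom.ker (Algebra.TensorProduct.productMap
          (Ideal.Quotient.mkₐ κ (IsLocalRing.maximalIdeal O ^ ν))
          (AlgHom.id κ (O ⧸ IsLocalRing.maximalIdeal O ^ ν))).toRingHom
        = Ideal.span {π ⊗ₜ[κ] (1 : O ⧸ IsLocalRing.maximalIdeal O ^ ν)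
            - 1 ⊗ₜ[κ] (Ideal.Quotient.mk (IsLocalRing.maximalIdeal O ^ ν) π)})
    ∧ (π ⊗ₜ[κ] (1 : O ⧸ IsLocalRing.maximalIdeal O ^ ν)
          - 1 ⊗ₜ[κ] (Ideal.Quotient.mk (IsLocalRing.maximalIdeal O ^ ν) π))
        ∈ nonZeroDivisors (O ⊗[κ] (O ⧸ IsLocalRing.maximalIdeal O ^ ν))
    ∧ IsUnit ((Algebra.TensorProduct.map (IsScalarTower.toAlgHom κ O K)
          (AlgHom.id κ (O ⧸ IsLocalRing.maximalIdeal O ^ ν)))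
        (π ⊗ₜ[κ] (1 : O ⧸ IsLocalRing.maximalIdeal O ^ ν)
          - 1 ⊗ₜ[κ] (Ideal.Quotient.mk (IsLocalRing.maximalIdeal O ^ ν) π))) :=
  diagonal_ideal_invertible_general hres ν π hπ
end
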